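/- arXiv:1211.1086 — 2 statements merged into one kernel-verified Lean document; each statement's English description precedes it below -/
import Mathlib

section
/- Let α, β be orientation-preserving homeomorphisms of [0,1] and z₀ ∈ (0,1) such that z₀ ≤ α(z₀) ≤ β(α(z₀)). Then for any word U that is a composition of finitely many copies of α and β (in any order, each appearing with positive powers only), we have U(β(α(z₀))) ≥ z₀. -/
/-- Lemma 1 of the paper. α, β are orientation-preserving
homeomorphisms of [0,1] (modelled as order isomorphisms of the interval),
z₀ ∈ (0,1), z₀ ≤ α(z₀) ≤ β(α(z₀)). Then any positive word U in α, β
satisfies U(β(α(z₀))) ≥ z₀. The word is encoded by a list of booleans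
(`true` picks α, `false` picks β). -/
theorem stmt_0 (α β : ↥(Set.Icc (0:ℝ) 1) ≃o ↥(Set.Icc (0:ℝ) 1))
    (z₀ : ↥(Set.Icc (0:ℝ) 1)) (h0 : (0:ℝ) < (z₀ : ℝ)) (h1 : (z₀ : ℝ) < 1)
    (h2 : z₀ ≤ α z₀) (h3 : α z₀ ≤ β (α z₀)) (w : List Bool) :
    z₀ ≤ w.foldr (fun b x => (if b then α else β) x) (β (α z₀)) := by
  have key : α z₀ ≤ w.foldr (fun b x => (if b then α else β) x) (β (α z₀)) := by
    induction w with
    | nil => exact h3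
    | cons b t ih =>
      simp only [List.foldr]
      cases b with
      | true =>
        simp only [if_true]
        calc α z₀ ≤ α (α z₀) := α.monotone h2
        _ ≤ _ := α.monotone ih
      | false =>
        simp only [if_neg Bool.false_ne_true]
        calc α z₀ ≤ β (α z₀) := h3
        _ ≤ _ := β.monotone ih
  exact h2.trans key
end

section
/- Let Γ be a finitely generated group with finite symmetric generating set S acting on [0,1] by C¹ diffeomorphisms with all generators f ∈ S satisfying |f'(x) − 1| < ε for all x (with (1−10ε)λ > 1 for some λ > 1). Suppose the spheres of radius n in Γ (w.r.t. S) have cardinality > λ^n for infinitely many n, and let Δ ⊂ (0,1) be a closed interval. If the intervals {g(Δ)}_{g∈Γ} have pairwise disjoint interiors, then a contradiction arises; i.e., there exist distinct g₁, g₂ ∈ Γ with g₁(Δ) ∩ g₂(Δ) having nonempty interior. -/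
/-- The ball of radius n in the Cayley graph of a group w.r.t. a finite set S. -/
def wordBall {Γ : Type*} [Group Γ] (S : Finset Γ) (n : ℕ) : Set Γ :=
  {g | ∃ l : List Γ, l.length ≤ n ∧ (∀ s ∈ l, s ∈ S) ∧ l.prod = g}

/-- let Γ be generated by a finite symmetric set S acting on
[0,1] by C¹ diffeomorphisms with |f'(x) - 1| < ε for all generators f, where
(1 - 10ε)λ > 1 for some λ > 1. If the spheres of radius n have cardinality
> λ^n for infinitely many n, and Δ ⊂ (0,1) is a closed interval, then
there exist distinct g₁, g₂ ∈ Γ such that g₁(Δ) ∩ g₂(Δ) has nonempty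
interior (the images cannot have pairwise disjoint interiors). -/
theorem stmt_11 (Γ : Type*) [Group Γ] (ρ : Γ →* Equiv.Perm ℝ) (S : Finset Γ)
    (hsymm : ∀ s ∈ S, s⁻¹ ∈ S) (hgen : Subgroup.closure (S : Set Γ) = ⊤)
    (ε lam : ℝ) (hε : 0 < ε) (hlam : 1 < lam) (h10 : 1 < (1 - 10 * ε) * lam)
    (hdiffeo : ∀ g : Γ, ContDiffOn ℝ 1 (fun x => ρ g x) (Set.Icc 0 1) ∧
      Set.BijOn (ρ g) (Set.Icc 0 1) (Set.Icc 0 1) ∧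
      StrictMonoOn (ρ g) (Set.Icc 0 1) ∧ ∀ x ∉ Set.Icc (0:ℝ) 1, ρ g x = x)
    (hgenderiv : ∀ f ∈ S, ∀ x ∈ Set.Icc (0:ℝ) 1, |deriv (fun y => ρ f y) x - 1| < ε)
    (hsphere : ∀ N : ℕ, ∃ n : ℕ, N ≤ n ∧
      lam ^ n < ((wordBall S n \ wordBall S (n - 1)).ncard : ℝ))
    (a b : ℝ) (ha : 0 < a) (hab : a < b) (hb : b < 1) :
    ∃ g₁ g₂ : Γ, g₁ ≠ g₂ ∧
      (interior ((fun x => ρ g₁ x) '' Set.Icc a b ∩ (fun x => ρ g₂ x) '' Set.Icc a b)).Nonempty := by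
  by_contra hcon
  push_neg at hcon
  have hε10 : 0 < 1 - 10 * ε := by nlinarith
  have hε1 : 0 < 1 - ε := by nlinarith
  have hba : 0 < b - a := sub_pos.2 hab
  have haI : a ∈ Set.Icc (0:ℝ) 1 := ⟨ha.le, (hab.trans hb).le⟩
  have hbI : b ∈ Set.Icc (0:ℝ) 1 := ⟨(ha.trans hab).le, hb.le⟩
  -- single generator estimate
  have L0 : ∀ f ∈ S, ∀ x ∈ Set.Icc (0:ℝ) 1, ∀ y ∈ Set.Icc (0:ℝ) 1, x ≤ y →
      (1 - ε) * (y - x) ≤ ρ f y - ρ f x := by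
    intro f hf x hx y hy hxy
    refine (convex_Icc (0:ℝ) 1).mul_sub_le_image_sub_of_le_deriv
      ((hdiffeo f).1.continuousOn) (fun z hz => ?_) (fun z hz => ?_) x hx y hy hxy
    · rw [interior_Icc] at hz
      exact ((hdiffeo f).1.contDiffAt (Icc_mem_nhds hz.1 hz.2)).differentiableAt one_ne_zero |>.differentiableWithinAt
    · rw [interior_Icc] at hz
      have := hgenderiv f hf z ⟨hz.1.le, hz.2.le⟩
      rw [abs_sub_lt_iff] at this
      linarith [this.2]
  -- product estimate
  have L1 : ∀ l : List Γ, (∀ s ∈ l, s ∈ S) → ∀ x ∈ Set.Icc (0:ℝ) 1,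
      ∀ y ∈ Set.Icc (0:ℝ) 1, x ≤ y →
      (1 - ε) ^ l.length * (y - x) ≤ ρ l.prod y - ρ l.prod x := by
    intro l
    induction l with
    | nil => intro _ x _ y _ hxy; simp
    | cons s t ih =>
      intro hmem x hx y hy hxy
      have hx' := (hdiffeo t.prod).2.1.mapsTo hx
      have hy' := (hdiffeo t.prod).2.1.mapsTo hy
      have h1 := ih (fun u hu => hmem u (List.mem_cons_of_mem _ hu)) x hx y hy hxy
      have hxy' : ρ t.prod x ≤ ρ t.prod y := by
        nlinarith [pow_pos hε1 t.length]
      have h2 := L0 s (hmem s List.mem_cons_self) _ hx' _ hy' hxy'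
      have heq : ∀ z, ρ (s :: t).prod z = ρ s (ρ t.prod z) := by
        intro z; rw [List.prod_cons, map_mul]; rfl
      rw [heq, heq, List.length_cons, pow_succ]
      have h3 : (1 - ε) * ((1 - ε) ^ t.length * (y - x)) ≤
          (1 - ε) * (ρ t.prod y - ρ t.prod x) :=
        mul_le_mul_of_nonneg_left h1 hε1.le
      calc (1 - ε) ^ t.length * (1 - ε) * (y - x)
          = (1 - ε) * ((1 - ε) ^ t.length * (y - x)) := by ring
        _ ≤ (1 - ε) * (ρ t.prod y - ρ t.prod x) := h3
        _ ≤ ρ s (ρ t.prod y) - ρ s (ρ t.prod x) := h2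
  -- image of [a,b] is an interval
  have hsub : Set.Icc a b ⊆ Set.Icc (0:ℝ) 1 := Set.Icc_subset_Icc ha.le hb.le
  have himg : ∀ g : Γ, (fun x => ρ g x) '' Set.Icc a b = Set.Icc (ρ g a) (ρ g b) := by
    intro g
    have hc : ContinuousOn (fun x => ρ g x) (Set.Icc a b) :=
      ((hdiffeo g).1.continuousOn).mono hsub
    refine Set.Subset.antisymm ?_ (intermediate_value_Icc hab.le hc)
    rintro _ ⟨x, hx, rfl⟩
    exact ⟨(hdiffeo g).2.2.1.monotoneOn haI (hsub hx) hx.1,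
      (hdiffeo g).2.2.1.monotoneOn (hsub hx) hbI hx.2⟩
  -- choose a large sphere
  obtain ⟨n₀, hn₀⟩ := pow_unbounded_of_one_lt ((b - a)⁻¹) h10
  obtain ⟨n, hn₀n, hcard⟩ := hsphere n₀
  set Sph := wordBall S n \ wordBall S (n - 1) with hSph
  have hlampos : (0:ℝ) < lam ^ n := pow_pos (by linarith) n
  have hfin : Sph.Finite := by
    by_contra hinf
    rw [Set.Infinite.ncard hinf] at hcard
    simp at hcard
    linarith
  set F := hfin.toFinset with hF
  set m := (1 - 10 * ε) ^ n * (b - a) with hm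
  have hmpos : 0 < m := mul_pos (pow_pos hε10 n) hba
  -- length lower bound on sphere elements
  have hlen : ∀ g ∈ F, m ≤ ρ g b - ρ g a := by
    intro g hg
    rw [hF, Set.Finite.mem_toFinset] at hg
    obtain ⟨l, hlN, hlS, rfl⟩ := hg.1
    have := L1 l hlS a haI b hbI hab.le
    have hpow : (1 - 10 * ε) ^ n ≤ (1 - ε) ^ l.length := by
      calc (1 - 10 * ε) ^ n ≤ (1 - 10 * ε) ^ l.length :=
            pow_le_pow_of_le_one hε10.le (by nlinarith) hlN
        _ ≤ (1 - ε) ^ l.length := pow_le_pow_left₀ hε10.le (by linarith) _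
    nlinarith
  have hend : ∀ g : Γ, ρ g a ∈ Set.Icc (0:ℝ) 1 ∧ ρ g b ∈ Set.Icc (0:ℝ) 1 :=
    fun g => ⟨(hdiffeo g).2.1.mapsTo haI, (hdiffeo g).2.1.mapsTo hbI⟩
  -- pairwise disjoint open intervals
  have hdisj : (↑F : Set Γ).PairwiseDisjoint (fun g => Set.Ioo (ρ g a) (ρ g b)) := by
    intro g₁ _ g₂ _ hne
    have h := hcon g₁ g₂ hne
    rw [interior_inter, himg, himg, interior_Icc, interior_Icc] at h
    exact Set.disjoint_iff_inter_eq_empty.mpr h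
  -- measure estimate
  have hsum : ∑ g ∈ F, MeasureTheory.volume (Set.Ioo (ρ g a) (ρ g b)) ≤
      MeasureTheory.volume (Set.Icc (0:ℝ) 1) := by
    rw [← MeasureTheory.measure_biUnion_finset hdisj (fun g _ => measurableSet_Ioo)]
    refine MeasureTheory.measure_mono ?_
    intro x hx
    simp only [Set.mem_iUnion] at hx
    obtain ⟨g, _, hx⟩ := hx
    exact ⟨(hend g).1.1.trans hx.1.le, hx.2.le.trans (hend g).2.2⟩
  have hsum' : ∑ g ∈ F, (ρ g b - ρ g a) ≤ 1 := by
    have h1 : ∑ g ∈ F, MeasureTheory.volume (Set.Ioo (ρ g a) (ρ g b)) =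
        ENNReal.ofReal (∑ g ∈ F, (ρ g b - ρ g a)) := by
      rw [ENNReal.ofReal_sum_of_nonneg (fun g hg => by linarith [hlen g hg])]
      exact Finset.sum_congr rfl fun g _ => Real.volume_Ioo
    rw [h1, Real.volume_Icc] at hsum
    have := (ENNReal.ofReal_le_ofReal_iff (by norm_num)).mp hsum
    linarith
  have hFm : (F.card : ℝ) * m ≤ ∑ g ∈ F, (ρ g b - ρ g a) := by
    have := Finset.card_nsmul_le_sum F (fun g => ρ g b - ρ g a) m hlen
    simpa [nsmul_eq_mul] using this
  have hcardF : lam ^ n < (F.card : ℝ) := by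
    rwa [hF, ← Set.ncard_eq_toFinset_card _ hfin]
  have hfinal : ((1 - 10 * ε) * lam) ^ n₀ * (b - a) ≤ 1 := by
    have h1 : ((1 - 10 * ε) * lam) ^ n₀ ≤ ((1 - 10 * ε) * lam) ^ n :=
      pow_le_pow_right₀ (by linarith) hn₀n
    have h2 : ((1 - 10 * ε) * lam) ^ n * (b - a) = lam ^ n * m := by
      rw [hm, mul_pow]; ring
    nlinarith
  have hlast := mul_lt_mul_of_pos_right hn₀ hba
  rw [inv_mul_cancel₀ hba.ne'] at hlast
  linarith
end
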